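/- Let v be the harmonic function on the unit disk given by v(r e^{iθ}) = Re ∑_{j=1}^∞ j·r^{2^j}·e^{i 2^j θ}, and set M(r) = sup_{θ∈[0,2π]} |v(r e^{iθ})| for 0 ≤ r < 1. Then there exist constants C > 0 and c > 0 such that M(r) ≤ C·(1 + log(1/(1−r)))² for all r ∈ [0,1), and limsup_{r→1⁻} M(r)/(log(1/(1−r)))² ≥ c. In particular, v belongs to the growth space with weight (1+log x)² but to no growth space with weight g̃ satisfying g̃(x)/(log x)² → 0 as x → ∞. -/

import Mathlib

/-!
Put `A(r) = ∑ (j + 1) r ^ 2 ^ (j + 1)`. Since `|cos| ≤ 1`, `|v(r e^{iθ})| ≤ A(r)`, with equality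
at `θ = 0`, so everything is a statement about `A`. With `x = 1 / (1 - r)`, Bernoulli's inequality
gives `r ^ 2 ^ (j + 1) ≥ 1/2` as long as `2 ^ (j + 2) ≤ x`, while `r ≤ e^{-(1-r)}` gives
`r ^ 2 ^ N ≤ 1/2` once `2 ^ N ≥ x`, after which the terms decay doubly exponentially. Hence `A(r)`
is comparable to `∑_{j ≤ log₂ x} (j + 1) ≍ (log x)²`. The last claim follows from the lower bound:
`(log x)² / 24 ≤ |v(1 - 1/x)| ≤ K g̃(x)` is incompatible with `g̃(x) / (log x)² → 0`.
-/

open Real Filter Finset Topology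

noncomputable def gapMajorant (r : ℝ) : ℝ := ∑' j : ℕ, ((j : ℝ) + 1) * r ^ (2 ^ (j + 1))

section
variable {r : ℝ}

lemma summable_gapMajorant (h0 : 0 ≤ r) (h1 : r < 1) :
    Summable (fun j : ℕ => ((j : ℝ) + 1) * r ^ (2 ^ (j + 1))) := by
  have hlin : Summable (fun j : ℕ => ((j : ℝ) + 1) * r ^ (j + 1)) := by
    have := (summable_nat_add_iff 1).2 (hasSum_coe_mul_geometric_of_norm_lt_one (r := r)
      (by rwa [norm_of_nonneg h0])).summable
    exact_mod_cast this
  refine hlin.of_nonneg_of_le (fun j => by positivity) (fun j => ?_)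
  exact mul_le_mul_of_nonneg_left (pow_le_pow_of_le_one h0 h1.le Nat.lt_two_pow_self.le)
    (by positivity)

lemma pow_le_half_of_one_le_mul (h0 : 0 ≤ r) {n : ℕ} (hn : 1 ≤ n * (1 - r)) :
    r ^ n ≤ 1 / 2 :=
  calc r ^ n ≤ exp (-(1 - r)) ^ n :=
        pow_le_pow_left₀ h0 (by linarith [add_one_le_exp (-(1 - r))]) n
    _ = exp (-(n * (1 - r))) := by rw [← exp_nat_mul]; ring_nf
    _ ≤ exp (-1) := exp_le_exp.2 (by linarith)
    _ ≤ 1 / 2 := exp_neg_one_lt_half.le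

lemma half_le_pow_of_mul_le (h0 : 0 ≤ r) {n : ℕ} (hn : n * (1 - r) ≤ 1 / 2) :
    1 / 2 ≤ r ^ n := by
  linarith [one_add_mul_sub_le_pow (by linarith : -1 ≤ r) n]

lemma add_one_mul_pow_two_pow_le (h0 : 0 ≤ r) {N : ℕ} (hq : r ^ (2 ^ N) ≤ 1 / 2) (k : ℕ) :
    (((k + N : ℕ) : ℝ) + 1) * r ^ (2 ^ (k + N + 1)) ≤ ((N : ℝ) + 1) / 4 * (1 / 2) ^ k := by
  have hcoef : (((k + N : ℕ) : ℝ) + 1) ≤ ((N : ℝ) + 1) * 2 ^ k := by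
    have : (k : ℝ) + 1 ≤ 2 ^ k := by exact_mod_cast Nat.lt_two_pow_self
    push_cast
    nlinarith [mul_nonneg (Nat.cast_nonneg (α := ℝ) N) (sub_nonneg.2 this)]
  have hpow : r ^ (2 ^ (k + N + 1)) ≤ (1 / 2) ^ (2 * (k + 1)) :=
    calc r ^ (2 ^ (k + N + 1)) = (r ^ (2 ^ N)) ^ (2 ^ (k + 1)) := by
          rw [← pow_mul, ← pow_add]; ring_nf
      _ ≤ (1 / 2) ^ (2 ^ (k + 1)) := pow_le_pow_left₀ (by positivity) hq _
      _ ≤ (1 / 2) ^ (2 * (k + 1)) := pow_le_pow_of_le_one (by norm_num) (by norm_num)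
          (by rw [pow_succ, mul_comm]; exact Nat.mul_le_mul_right 2 Nat.lt_two_pow_self)
  calc (((k + N : ℕ) : ℝ) + 1) * r ^ (2 ^ (k + N + 1))
      ≤ ((N : ℝ) + 1) * 2 ^ k * (1 / 2) ^ (2 * (k + 1)) := by gcongr
    _ = ((N : ℝ) + 1) / 4 * (1 / 2) ^ k := by
        have h : (2 : ℝ) ^ k * (1 / 2) ^ k = 1 := by rw [← mul_pow]; norm_num
        linear_combination ((N : ℝ) + 1) / 4 * (1 / 2) ^ k * h

lemma gapMajorant_le_of_one_le_two_pow_mul (h0 : 0 ≤ r) (h1 : r < 1) {N : ℕ}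
    (hN : 1 ≤ 2 ^ N * (1 - r)) :
    gapMajorant r ≤ ((N : ℝ) + 1) ^ 2 := by
  have hsum := summable_gapMajorant h0 h1
  have hhead : ∑ j ∈ range N, ((j : ℝ) + 1) * r ^ (2 ^ (j + 1)) ≤ (N : ℝ) * N := by
    have := sum_le_card_nsmul (range N) (fun j : ℕ => ((j : ℝ) + 1) * r ^ (2 ^ (j + 1))) (N : ℝ)
      fun j hj => by
        have : (j : ℝ) + 1 ≤ N := by exact_mod_cast mem_range.1 hj
        have : r ^ (2 ^ (j + 1)) ≤ 1 := pow_le_one₀ h0 h1.le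
        nlinarith [pow_nonneg h0 (2 ^ (j + 1))]
    simpa using this
  have hterm := add_one_mul_pow_two_pow_le h0
    (pow_le_half_of_one_le_mul h0 (by exact_mod_cast hN) : r ^ (2 ^ N) ≤ 1 / 2)
  have htail :
      ∑' k : ℕ, (((k + N : ℕ) : ℝ) + 1) * r ^ (2 ^ (k + N + 1)) ≤ ((N : ℝ) + 1) / 2 := by
    have hgeom := hasSum_geometric_two.mul_left (((N : ℝ) + 1) / 4)
    calc _ ≤ ∑' k : ℕ, ((N : ℝ) + 1) / 4 * (1 / 2) ^ k :=
          ((summable_nat_add_iff N).2 hsum).tsum_le_tsum hterm hgeom.summable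
      _ = ((N : ℝ) + 1) / 2 := by rw [hgeom.tsum_eq]; ring
  unfold gapMajorant
  rw [← hsum.sum_add_tsum_nat_add N]
  nlinarith

lemma le_gapMajorant_of_two_pow_mul_le_one (h0 : 0 ≤ r) (h1 : r < 1) {N : ℕ}
    (hN : 2 ^ (N + 1) * (1 - r) ≤ 1) :
    (N : ℝ) * (N + 1) / 4 ≤ gapMajorant r := by
  have hterm : ∀ j ∈ range N, ((j : ℝ) + 1) / 2 ≤ ((j : ℝ) + 1) * r ^ (2 ^ (j + 1)) := by
    intro j hj
    have hj : (2 : ℝ) ^ (j + 1) ≤ 2 ^ N := pow_le_pow_right₀ (by norm_num) (mem_range.1 hj)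
    have := half_le_pow_of_mul_le h0 (n := 2 ^ (j + 1))
      (by push_cast; rw [pow_succ] at hN; nlinarith)
    nlinarith
  have hgauss : ∑ j ∈ range N, ((j : ℝ) + 1) = N * (N + 1) / 2 := by
    have := sum_range_id_mul_two (N + 1)
    rw [sum_range_succ'] at this
    have h : ((∑ j ∈ range N, (j + 1) : ℕ) : ℝ) * 2 = (N + 1) * N := by exact_mod_cast this
    push_cast at h
    linarith
  calc (N : ℝ) * (N + 1) / 4 = ∑ j ∈ range N, ((j : ℝ) + 1) / 2 := by
        rw [← sum_div, hgauss]; ring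
    _ ≤ ∑ j ∈ range N, ((j : ℝ) + 1) * r ^ (2 ^ (j + 1)) := sum_le_sum hterm
    _ ≤ gapMajorant r := (summable_gapMajorant h0 h1).sum_le_tsum _ (fun j _ => by positivity)

lemma abs_le_gapMajorant_of_hasSum (h0 : 0 ≤ r) (h1 : r < 1) {θ s : ℝ}
    (hs : HasSum (fun j : ℕ => ((j : ℝ) + 1) * r ^ (2 ^ (j + 1)) * cos ((2 ^ (j + 1) : ℕ) * θ)) s) :
    |s| ≤ gapMajorant r := by
  refine hs.norm_le_of_bounded (summable_gapMajorant h0 h1).hasSum fun j => ?_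
  rw [norm_mul, Real.norm_eq_abs, Real.norm_eq_abs, abs_of_nonneg (by positivity)]
  exact mul_le_of_le_one_right (by positivity) (abs_cos_le_one _)

lemma gapMajorant_le_log_sq (h0 : 0 ≤ r) (h1 : r < 1) :
    gapMajorant r ≤ 4 * (1 + log (1 / (1 - r))) ^ 2 := by
  have ht : 0 < 1 - r := by linarith
  set x := 1 / (1 - r)
  obtain ⟨M, hMx, hxM⟩ := exists_nat_pow_near (one_le_one_div ht (by linarith)) one_lt_two
  have hMlog : M * log 2 ≤ log x := by
    rw [← log_pow]; exact log_le_log (by positivity) hMx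
  have hN : 1 ≤ 2 ^ (M + 1) * (1 - r) := (div_le_iff₀ ht).1 hxM.le
  calc gapMajorant r ≤ ((M + 1 : ℕ) + 1) ^ 2 := gapMajorant_le_of_one_le_two_pow_mul h0 h1 hN
    _ ≤ (2 * (1 + log x)) ^ 2 := by
        gcongr
        push_cast
        nlinarith [log_two_gt_d9, Nat.cast_nonneg (α := ℝ) M]
    _ = 4 * (1 + log x) ^ 2 := by ring

lemma log_sq_div_le_gapMajorant (h0 : 3 / 4 ≤ r) (h1 : r < 1) :
    log (1 / (1 - r)) ^ 2 / 24 ≤ gapMajorant r := by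
  have ht : 0 < 1 - r := by linarith
  set x := 1 / (1 - r)
  have hx : 4 ≤ x := by rw [le_div_iff₀ ht]; linarith
  obtain ⟨M, hMx, hxM⟩ := exists_nat_pow_near (by linarith : 1 ≤ x) one_lt_two
  have hM : 2 ≤ M := by
    have : (2 : ℝ) ^ 2 < 2 ^ (M + 1) := by linarith
    have := (pow_lt_pow_iff_right₀ one_lt_two).1 this
    omega
  obtain ⟨N, rfl⟩ : ∃ N, M = N + 1 := ⟨M - 1, by omega⟩
  have hN : 2 ^ (N + 1) * (1 - r) ≤ 1 := (le_div_iff₀ ht).1 hMx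
  have hlog : log x < N + 1 + 1 := by
    have := log_lt_log (by positivity) hxM
    rw [log_pow] at this
    push_cast at this
    nlinarith [log_two_lt_d9, Nat.cast_nonneg (α := ℝ) N]
  have hN1 : (1 : ℝ) ≤ N := by exact_mod_cast (by omega : 1 ≤ N)
  have hlog0 : 0 ≤ log x := log_nonneg (by linarith)
  calc log x ^ 2 / 24 ≤ (N : ℝ) * (N + 1) / 4 := by nlinarith
    _ ≤ gapMajorant r := le_gapMajorant_of_two_pow_mul_le_one (by linarith) h1 hN

end

lemma not_tendsto_div_nhds_zero_of_le_mul {α : Type*} {l : Filter α} [l.NeBot] {f g : α → ℝ}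
    {c K : ℝ} (hc : 0 < c) (hg : ∀ᶠ x in l, 0 < g x) (hle : ∀ᶠ x in l, c * g x ≤ K * f x) :
    ¬ Tendsto (fun x => f x / g x) l (𝓝 0) := by
  intro h
  have hK : Tendsto (fun x => K * (f x / g x)) l (𝓝 0) := by simpa using h.const_mul K
  have : c ≤ 0 := ge_of_tendsto hK <| by
    filter_upwards [hg, hle] with x hgx hx
    rwa [← mul_div_assoc, le_div_iff₀ hgx]
  linarith

theorem gap_series_log_squared_growth (v : ℂ → ℝ)
    (hv : ∀ r θ : ℝ, 0 ≤ r → r < 1 →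
      HasSum (fun j : ℕ => ((j : ℝ) + 1) * r ^ (2 ^ (j + 1)) * Real.cos ((2 ^ (j + 1) : ℕ) * θ))
        (v ((r : ℂ) * Complex.exp (Complex.I * (θ : ℂ))))) :
    (∃ C : ℝ, 0 < C ∧ ∀ z : ℂ, ‖z‖ < 1 →
      |v z| ≤ C * (1 + Real.log (1 / (1 - ‖z‖))) ^ 2) ∧
    (∃ c : ℝ, 0 < c ∧ ∃ᶠ r in nhdsWithin (1 : ℝ) (Set.Iio 1), ∃ θ : ℝ,
      c * (Real.log (1 / (1 - r))) ^ 2 ≤ |v ((r : ℂ) * Complex.exp (Complex.I * (θ : ℂ)))|) ∧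
    (∀ gt : ℝ → ℝ,
      Filter.Tendsto (fun x : ℝ => gt x / (Real.log x) ^ 2) Filter.atTop (nhds 0) →
      ¬ ∃ K : ℝ, ∀ z : ℂ, ‖z‖ < 1 →
          |v z| ≤ K * gt (1 / (1 - ‖z‖))) := by
  have hv_real : ∀ r : ℝ, 0 ≤ r → r < 1 → v r = gapMajorant r := fun r h0 h1 => by
    simpa [gapMajorant] using (hv r 0 h0 h1).tsum_eq.symm
  have hlower : ∀ r : ℝ, 3 / 4 ≤ r → r < 1 → log (1 / (1 - r)) ^ 2 / 24 ≤ |v r| :=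
    fun r h0 h1 => by
      rw [hv_real r (by linarith) h1]
      exact (log_sq_div_le_gapMajorant h0 h1).trans (le_abs_self _)
  refine ⟨⟨4, by norm_num, fun z hz => ?_⟩, ⟨1 / 24, by norm_num, ?_⟩, ?_⟩
  · have hs := hv ‖z‖ z.arg (norm_nonneg z) hz
    rw [mul_comm Complex.I, Complex.norm_mul_exp_arg_mul_I] at hs
    exact (abs_le_gapMajorant_of_hasSum (norm_nonneg z) hz hs).trans
      (gapMajorant_le_log_sq (norm_nonneg z) hz)
  · refine (eventually_of_mem (Ioo_mem_nhdsLT (by norm_num : (3 / 4 : ℝ) < 1))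
      fun r hr => ⟨0, ?_⟩).frequently
    simpa [div_eq_inv_mul] using hlower r hr.1.le hr.2
  · rintro gt hgt ⟨K, hK⟩
    refine not_tendsto_div_nhds_zero_of_le_mul (K := K) (by norm_num : (0 : ℝ) < 1 / 24) ?_ ?_ hgt
    · filter_upwards [eventually_gt_atTop 1] with x hx using pow_pos (log_pos hx) 2
    · filter_upwards [eventually_ge_atTop 4] with x hx
      have hr0 : 3 / 4 ≤ 1 - 1 / x := by
        have : 1 / x ≤ 1 / 4 := one_div_le_one_div_of_le (by norm_num) hx
        linarith
      have hr1 : 1 - 1 / x < 1 := sub_lt_self 1 (by positivity)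
      have hnorm : ‖((1 - 1 / x : ℝ) : ℂ)‖ = 1 - 1 / x := by
        rw [Complex.norm_real, norm_of_nonneg (by linarith)]
      have hx_eq : 1 / (1 - (1 - 1 / x)) = x := by rw [sub_sub_cancel, one_div_one_div]
      have := (hlower _ hr0 hr1).trans (hK _ (by rwa [hnorm]))
      rw [hnorm, hx_eq] at this
      linarith
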